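/- (Core estimate in the proof of Theorem 1.) Let μ be a probability measure on ℝ^m, let (Z, 𝒜, ζ) be a probability space, let h, h' : Z → ℝ^m be measurable with ∫ ‖h(z) − h'(z)‖ dζ(z) < ∞, and let ω be a probability measure on ℝ^m with ∫ ‖t‖ dω(t) < ∞. Then | CFD²_ω(μ, h_*ζ) − CFD²_ω(μ, h'_*ζ) | ≤ 4 · (∫ ‖t‖ dω(t)) · (∫ ‖h(z) − h'(z)‖ dζ(z)). -/

import Mathlib

open MeasureTheory Filter Topology
open scoped NNReal

/-- Characteristic function of a measure on Euclidean space. -/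
noncomputable def charFn {m : ℕ} (μ : Measure (EuclideanSpace ℝ (Fin m)))
    (t : EuclideanSpace ℝ (Fin m)) : ℂ :=
  ∫ x, Complex.exp (Complex.I * ((inner ℝ t x : ℝ) : ℂ)) ∂μ

/-- Squared characteristic function distance between `μ` and `ν` with weighting measure `ω`. -/
noncomputable def CFD2 {m : ℕ} (ω μ ν : Measure (EuclideanSpace ℝ (Fin m))) : ℝ :=
  ∫ t, ‖charFn μ t - charFn ν t‖ ^ 2 ∂ω

lemma exp_I_lipschitz (x y : ℝ) :
    ‖Complex.exp (Complex.I * x) - Complex.exp (Complex.I * y)‖ ≤ |x - y| := by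
  have hd : ∀ s : ℝ, HasDerivAt (fun s : ℝ => Complex.exp (Complex.I * s))
      (Complex.exp (Complex.I * s) * Complex.I) s := by
    intro s
    have h1 : HasDerivAt (fun s : ℝ => ((s : ℂ) * Complex.I)) Complex.I s := by
      simpa using (HasDerivAt.ofReal_comp (hasDerivAt_id s)).mul_const Complex.I
    have := h1.cexp
    simpa [mul_comm] using this
  have hlip : LipschitzWith 1 (fun s : ℝ => Complex.exp (Complex.I * s)) := by
    apply lipschitzWith_of_nnnorm_deriv_le (fun s => (hd s).differentiableAt)
    intro s
    rw [(hd s).deriv]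
    simp [← NNReal.coe_le_coe, Complex.norm_exp]
  simpa [dist_eq_norm, Real.dist_eq] using hlip.dist_le_mul x y

lemma charFn_norm_le {m : ℕ} (μ : Measure (EuclideanSpace ℝ (Fin m)))
    [IsProbabilityMeasure μ] (t : EuclideanSpace ℝ (Fin m)) : ‖charFn μ t‖ ≤ 1 := by
  calc ‖charFn μ t‖ ≤ ∫ x, ‖Complex.exp (Complex.I * ((inner ℝ t x : ℝ) : ℂ))‖ ∂μ :=
        norm_integral_le_integral_norm _
    _ = ∫ (_ : EuclideanSpace ℝ (Fin m)), (1 : ℝ) ∂μ := by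
        congr 1; funext x
        rw [mul_comm]
        exact Complex.norm_exp_ofReal_mul_I _
    _ = 1 := by simp

/-- core estimate in the proof of Theorem 1:
|CFD²_ω(μ, h_*ζ) − CFD²_ω(μ, h'_*ζ)| ≤ 4 (∫‖t‖ dω) (∫‖h − h'‖ dζ). -/
theorem abs_cfd_sub_cfd_le
    {m : ℕ}
    (μ : Measure (EuclideanSpace ℝ (Fin m))) [IsProbabilityMeasure μ]
    {Z : Type*} [MeasurableSpace Z] (ζ : Measure Z) [IsProbabilityMeasure ζ]
    (h h' : Z → EuclideanSpace ℝ (Fin m))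
    (hh : Measurable h) (hh' : Measurable h')
    (hint : Integrable (fun z => ‖h z - h' z‖) ζ)
    (ω : Measure (EuclideanSpace ℝ (Fin m))) [IsProbabilityMeasure ω]
    (hωint : Integrable (fun t => ‖t‖) ω) :
    |CFD2 ω μ (ζ.map h) - CFD2 ω μ (ζ.map h')|
      ≤ 4 * (∫ t, ‖t‖ ∂ω) * (∫ z, ‖h z - h' z‖ ∂ζ) := by
  set C : ℝ := ∫ z, ‖h z - h' z‖ ∂ζ with hC
  have hC0 : 0 ≤ C := integral_nonneg fun z => norm_nonneg _
  -- the elementary integrand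
  set e : EuclideanSpace ℝ (Fin m) → EuclideanSpace ℝ (Fin m) → ℂ := fun t x => Complex.exp (Complex.I * ((inner ℝ t x : ℝ) : ℂ)) with he
  have hecont : Continuous fun p : EuclideanSpace ℝ (Fin m) × EuclideanSpace ℝ (Fin m) => e p.1 p.2 := by
    exact Complex.continuous_exp.comp (continuous_const.mul
      (Complex.continuous_ofReal.comp continuous_inner))
  have henorm : ∀ t x : EuclideanSpace ℝ (Fin m), ‖e t x‖ = 1 := by
    intro t x; rw [he]; simp only; rw [mul_comm]; exact Complex.norm_exp_ofReal_mul_I _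
  -- integrability of e t ∘ g for measurable g
  have hmeas : ∀ (g : Z → EuclideanSpace ℝ (Fin m)), Measurable g → ∀ t : EuclideanSpace ℝ (Fin m),
      Integrable (fun z => e t (g z)) ζ := by
    intro g hg t
    refine ⟨(Complex.measurable_exp.comp (measurable_const.mul
      (Complex.measurable_ofReal.comp (measurable_const.inner hg)))).aestronglyMeasurable, ?_⟩
    have : HasFiniteIntegral (fun _ : Z => (1 : ℝ)) ζ := (integrable_const 1).2
    refine this.mono (Filter.Eventually.of_forall fun z => ?_)
    simp [henorm t (g z)]
  -- pushforward characteristic functions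
  have hmap : ∀ (g : Z → EuclideanSpace ℝ (Fin m)), Measurable g → ∀ t : EuclideanSpace ℝ (Fin m),
      charFn (ζ.map g) t = ∫ z, e t (g z) ∂ζ := by
    intro g hg t
    rw [charFn, integral_map hg.aemeasurable]
    exact (hecont.comp (Continuous.prodMk_right t)).aestronglyMeasurable
  -- probability measures
  have hprob : ∀ (g : Z → EuclideanSpace ℝ (Fin m)), Measurable g → IsProbabilityMeasure (ζ.map g) := by
    intro g hg; exact Measure.isProbabilityMeasure_map hg.aemeasurable
  have hb := hprob h hh
  have hb' := hprob h' hh'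
  -- key pointwise estimate on |charFn (map h) t - charFn (map h') t|
  have hkey : ∀ t : EuclideanSpace ℝ (Fin m), ‖charFn (ζ.map h) t - charFn (ζ.map h') t‖ ≤ ‖t‖ * C := by
    intro t
    rw [hmap h hh t, hmap h' hh' t, ← integral_sub (hmeas h hh t) (hmeas h' hh' t)]
    calc ‖∫ z, (e t (h z) - e t (h' z)) ∂ζ‖
        ≤ ∫ z, ‖e t (h z) - e t (h' z)‖ ∂ζ := norm_integral_le_integral_norm _
      _ ≤ ∫ z, ‖t‖ * ‖h z - h' z‖ ∂ζ := by
          refine integral_mono (((hmeas h hh t).sub (hmeas h' hh' t)).norm)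
            (hint.const_mul ‖t‖) fun z => ?_
          calc ‖e t (h z) - e t (h' z)‖
              ≤ |(inner ℝ t (h z) : ℝ) - (inner ℝ t (h' z) : ℝ)| := exp_I_lipschitz _ _
            _ = |(inner ℝ t (h z - h' z) : ℝ)| := by rw [inner_sub_right]
            _ ≤ ‖t‖ * ‖h z - h' z‖ := by
                rw [← Real.norm_eq_abs]; exact norm_inner_le_norm t (h z - h' z)
      _ = ‖t‖ * C := integral_const_mul _ _
  -- pointwise estimate on the squared differences
  set F : EuclideanSpace ℝ (Fin m) → ℝ := fun t => ‖charFn μ t - charFn (ζ.map h) t‖ ^ 2 with hF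
  set G : EuclideanSpace ℝ (Fin m) → ℝ := fun t => ‖charFn μ t - charFn (ζ.map h') t‖ ^ 2 with hG
  have hptwise : ∀ t : EuclideanSpace ℝ (Fin m), |F t - G t| ≤ 4 * (‖t‖ * C) := by
    intro t
    set u := charFn μ t - charFn (ζ.map h) t
    set v := charFn μ t - charFn (ζ.map h') t
    have hu : ‖u‖ ≤ 2 := by
      calc ‖u‖ = ‖u‖ := rfl
        _ ≤ ‖charFn μ t‖ + ‖charFn (ζ.map h) t‖ := norm_sub_le _ _
        _ ≤ 1 + 1 := add_le_add (charFn_norm_le μ t) (charFn_norm_le _ t)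
        _ = 2 := by norm_num
    have hv : ‖v‖ ≤ 2 := by
      calc ‖v‖ = ‖v‖ := rfl
        _ ≤ ‖charFn μ t‖ + ‖charFn (ζ.map h') t‖ := norm_sub_le _ _
        _ ≤ 1 + 1 := add_le_add (charFn_norm_le μ t) (charFn_norm_le _ t)
        _ = 2 := by norm_num
    have habs : |‖u‖ - ‖v‖| ≤ ‖t‖ * C := by
      calc |‖u‖ - ‖v‖| = |‖u‖ - ‖v‖| := rfl
        _ ≤ ‖u - v‖ := abs_norm_sub_norm_le u v
        _ = ‖charFn (ζ.map h') t - charFn (ζ.map h) t‖ := by congr 1; ring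
        _ = ‖charFn (ζ.map h) t - charFn (ζ.map h') t‖ := norm_sub_rev _ _
        _ ≤ ‖t‖ * C := hkey t
    have : F t - G t = (‖u‖ - ‖v‖) * (‖u‖ + ‖v‖) := by
      rw [hF, hG]; ring
    rw [this, abs_mul]
    have h4 : |‖u‖ + ‖v‖| ≤ 4 := by
      rw [abs_of_nonneg (by positivity)]; linarith
    calc |‖u‖ - ‖v‖| * |‖u‖ + ‖v‖|
        ≤ (‖t‖ * C) * 4 := mul_le_mul habs h4 (abs_nonneg _) (by positivity)
      _ = 4 * (‖t‖ * C) := by ring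
  -- strong measurability of F and G
  have hsm : ∀ (ν : Measure (EuclideanSpace ℝ (Fin m))), SFinite ν → StronglyMeasurable (charFn ν) := by
    intro ν hsf
    exact hecont.stronglyMeasurable.integral_prod_right'
  have hsmμ := hsm μ inferInstance
  have hsmb := hsm (ζ.map h) inferInstance
  have hsmb' := hsm (ζ.map h') inferInstance
  have hFi : Integrable F ω := by
    refine ⟨((((hsmμ.sub hsmb).norm).pow 2).aestronglyMeasurable), ?_⟩
    have : HasFiniteIntegral (fun _ : EuclideanSpace ℝ (Fin m) => (4 : ℝ)) ω := (integrable_const 4).2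
    refine this.mono (Filter.Eventually.of_forall fun t => ?_)
    have h1 : ‖charFn μ t - charFn (ζ.map h) t‖ ≤ 2 := by
      calc ‖charFn μ t - charFn (ζ.map h) t‖
          = ‖charFn μ t - charFn (ζ.map h) t‖ := rfl
        _ ≤ ‖charFn μ t‖ + ‖charFn (ζ.map h) t‖ := norm_sub_le _ _
        _ ≤ 1 + 1 := add_le_add (charFn_norm_le μ t) (charFn_norm_le _ t)
        _ = 2 := by norm_num
    have h2 : (0:ℝ) ≤ ‖charFn μ t - charFn (ζ.map h) t‖ := norm_nonneg _
    simp only [hF, Real.norm_eq_abs, abs_pow, abs_abs]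
    calc |‖charFn μ t - charFn (ζ.map h) t‖| ^ 2
        = ‖charFn μ t - charFn (ζ.map h) t‖ ^ 2 := by rw [abs_of_nonneg h2]
      _ ≤ 2 ^ 2 := by exact pow_le_pow_left₀ h2 h1 2
      _ ≤ ‖(4:ℝ)‖ := by norm_num
  have hGi : Integrable G ω := by
    refine ⟨((((hsmμ.sub hsmb').norm).pow 2).aestronglyMeasurable), ?_⟩
    have : HasFiniteIntegral (fun _ : EuclideanSpace ℝ (Fin m) => (4 : ℝ)) ω := (integrable_const 4).2
    refine this.mono (Filter.Eventually.of_forall fun t => ?_)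
    have h1 : ‖charFn μ t - charFn (ζ.map h') t‖ ≤ 2 := by
      calc ‖charFn μ t - charFn (ζ.map h') t‖
          = ‖charFn μ t - charFn (ζ.map h') t‖ := rfl
        _ ≤ ‖charFn μ t‖ + ‖charFn (ζ.map h') t‖ := norm_sub_le _ _
        _ ≤ 1 + 1 := add_le_add (charFn_norm_le μ t) (charFn_norm_le _ t)
        _ = 2 := by norm_num
    have h2 : (0:ℝ) ≤ ‖charFn μ t - charFn (ζ.map h') t‖ := norm_nonneg _
    simp only [hG, Real.norm_eq_abs, abs_pow, abs_abs]
    calc |‖charFn μ t - charFn (ζ.map h') t‖| ^ 2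
        = ‖charFn μ t - charFn (ζ.map h') t‖ ^ 2 := by rw [abs_of_nonneg h2]
      _ ≤ 2 ^ 2 := by exact pow_le_pow_left₀ h2 h1 2
      _ ≤ ‖(4:ℝ)‖ := by norm_num
  -- conclude
  have heq : CFD2 ω μ (ζ.map h) - CFD2 ω μ (ζ.map h') = ∫ t, (F t - G t) ∂ω := by
    rw [CFD2, CFD2, integral_sub hFi hGi]
  rw [heq]
  calc |∫ t, (F t - G t) ∂ω| ≤ ∫ t, |F t - G t| ∂ω := by
        simpa [Real.norm_eq_abs] using norm_integral_le_integral_norm (fun t => F t - G t)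
    _ ≤ ∫ t, 4 * (‖t‖ * C) ∂ω := by
        refine integral_mono (hFi.sub hGi).abs ((hωint.const_mul C).const_mul 4 |>.congr ?_)
          hptwise
        exact Filter.Eventually.of_forall fun t => by ring
    _ = 4 * (∫ t, ‖t‖ ∂ω) * C := by
        rw [integral_const_mul]
        rw [show (fun t : EuclideanSpace ℝ (Fin m) => ‖t‖ * C) = fun t : EuclideanSpace ℝ (Fin m) => C * ‖t‖ from funext fun t => mul_comm _ _]
        rw [integral_const_mul]; ring
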